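/- For every n ≥ 1 and every pair of partitions σ, τ of n with ρ(σ,τ) = 1, writing b = s(σ,τ) and c = m(σ,τ), there exists a coupling (X₁, Y₁) of one step of the split-merge chain from σ and one step from τ such that almost surely ρ(X₁, Y₁) ≤ 1, ℙ(X₁ = Y₁) ≥ 4b/n², and for all reals x, y, R with 0 < x ≤ c and |V(σ, y)| ≥ R, ℙ( m(X₁, Y₁) ≥ x + y ) ≥ 2c(R − 2c)/n². -/

import Mathlib

noncomputable section
open scoped BigOperators Classical

/-- Total variation distance between two functions (distributions) on a finite set. -/
def tvDist {Ω : Type*} [Fintype Ω] (μ ν : Ω → ℝ) : ℝ := (∑ x, |μ x - ν x|) / 2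

/-- Transition matrix of the random transposition walk on `S_n`. -/
def rtMatrix (n : ℕ) : Matrix (Equiv.Perm (Fin n)) (Equiv.Perm (Fin n)) ℝ :=
  fun σ α =>
    ((Finset.univ.filter (fun ij : Fin n × Fin n => σ * Equiv.swap ij.1 ij.2 = α)).card : ℝ)
      / (n : ℝ) ^ 2

/-- Uniform (stationary) distribution on `S_n`. -/
def rtPi (n : ℕ) : Equiv.Perm (Fin n) → ℝ := fun _ => ((n.factorial : ℝ))⁻¹

/-- Cycle type of a permutation, as a partition of `n`. -/
def cyc (n : ℕ) (α : Equiv.Perm (Fin n)) : Nat.Partition n :=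
  cast (congrArg Nat.Partition (Fintype.card_fin n)) α.partition

/-- Transition probabilities of the split-merge chain on partitions of `n`. -/
def smKernel (n : ℕ) (p q : Nat.Partition n) : ℝ :=
  (if q = p then (1 : ℝ) / n else 0)
  + (p.parts.map (fun a =>
      ∑ r ∈ Finset.Ico 1 a,
        if q.parts = r ::ₘ (a - r) ::ₘ p.parts.erase a then (a : ℝ) / (n : ℝ) ^ 2 else 0)).sum
  + (p.parts.map (fun a =>
      ((p.parts.erase a).map (fun b =>
        if q.parts = (a + b) ::ₘ ((p.parts.erase a).erase b) then
          (a : ℝ) * (b : ℝ) / (n : ℝ) ^ 2 else 0)).sum)).sum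

/-- Transition matrix of the split-merge chain. -/
def smMatrix (n : ℕ) : Matrix (Nat.Partition n) (Nat.Partition n) ℝ := fun p q => smKernel n p q

/-- Stationary distribution of the split-merge chain: `π(σ) = |Perm(σ)|/n!`. -/
def smPi (n : ℕ) : Nat.Partition n → ℝ := fun σ =>
  ((Finset.univ.filter (fun α : Equiv.Perm (Fin n) => cyc n α = σ)).card : ℝ) / (n.factorial : ℝ)

/-- `p` is obtained from `q` by splitting one part into two. -/
def IsSplitOf (n : ℕ) (p q : Nat.Partition n) : Prop :=
  ∃ a ∈ q.parts, ∃ r : ℕ, 1 ≤ r ∧ r < a ∧ p.parts = r ::ₘ (a - r) ::ₘ q.parts.erase a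

/-- Adjacency graph of single split/merge moves on partitions of `n`. -/
def smGraph (n : ℕ) : SimpleGraph (Nat.Partition n) where
  Adj p q := p ≠ q ∧ (IsSplitOf n p q ∨ IsSplitOf n q p)
  symm := ⟨fun p q h => ⟨h.1.symm, h.2.symm⟩⟩
  loopless := ⟨fun p h => h.1 rfl⟩

/-- The split-merge graph distance `ρ` on partitions of `n`. -/
def rho (n : ℕ) (p q : Nat.Partition n) : ℕ := (smGraph n).dist p q

/-- The multiset of parts on which two partitions differ. -/
def diffParts {n : ℕ} (σ τ : Nat.Partition n) : Multiset ℕ :=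
  (σ.parts - τ.parts) + (τ.parts - σ.parts)

/-- `s(σ,τ)`: the smallest part in which adjacent `σ` and `τ` differ; `s(σ,σ) = n/2`. -/
def sPart (n : ℕ) (σ τ : Nat.Partition n) : ℝ :=
  if σ = τ then (n : ℝ) / 2 else ((((diffParts σ τ).sort (· ≤ ·)).headI : ℕ) : ℝ)

/-- `m(σ,τ)`: the medium part in which adjacent `σ` and `τ` differ; `m(σ,σ) = n`. -/
def mPart (n : ℕ) (σ τ : Nat.Partition n) : ℝ :=
  if σ = τ then (n : ℝ) else (((((diffParts σ τ).sort (· ≤ ·)).tail).headI : ℕ) : ℝ)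

/-- `|V(σ,x)|`: the sum of the parts of `σ` of size at least `x`. -/
def Vsum {n : ℕ} (σ : Nat.Partition n) (x : ℝ) : ℝ :=
  (((Multiset.filter (fun a : ℕ => x ≤ (a : ℝ)) σ.parts).sum : ℕ) : ℝ)

/-- A coupling of two split-merge chains started at `(σ, τ)`, given by the probabilities
`P t h` of each finite trajectory `h` of states at times `0, …, t`. -/
def IsSMCoupling (n : ℕ) (σ τ : Nat.Partition n)
    (P : (t : ℕ) → (Fin (t + 1) → Nat.Partition n × Nat.Partition n) → ℝ) : Prop :=
  (∀ t h, 0 ≤ P t h) ∧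
  (P 0 (fun _ => (σ, τ)) = 1) ∧
  (∀ (t : ℕ) (h : Fin (t + 1) → Nat.Partition n × Nat.Partition n),
      P t h = ∑ z : Nat.Partition n × Nat.Partition n, P (t + 1) (Fin.snoc h z)) ∧
  (∀ (t : ℕ) (h : Fin (t + 1) → Nat.Partition n × Nat.Partition n) (a : Nat.Partition n),
      ∑ b : Nat.Partition n, P (t + 1) (Fin.snoc h (a, b))
        = smKernel n (h (Fin.last t)).1 a * P t h) ∧
  (∀ (t : ℕ) (h : Fin (t + 1) → Nat.Partition n × Nat.Partition n) (b : Nat.Partition n),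
      ∑ a : Nat.Partition n, P (t + 1) (Fin.snoc h (a, b))
        = smKernel n (h (Fin.last t)).2 b * P t h)

/-- The coupling is coalescent: once the two coordinates meet they stay together. -/
def IsCoalescent (n : ℕ)
    (P : (t : ℕ) → (Fin (t + 1) → Nat.Partition n × Nat.Partition n) → ℝ) : Prop :=
  ∀ (t : ℕ) (h : Fin (t + 1) → Nat.Partition n × Nat.Partition n), P t h ≠ 0 →
    ∀ i j : Fin (t + 1), i ≤ j → (h i).1 = (h i).2 → (h j).1 = (h j).2

/-- Along the coupling, `ρ(X_t, Y_t) ≤ 1` almost surely. -/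
def StaysClose (n : ℕ)
    (P : (t : ℕ) → (Fin (t + 1) → Nat.Partition n × Nat.Partition n) → ℝ) : Prop :=
  ∀ (t : ℕ) (h : Fin (t + 1) → Nat.Partition n × Nat.Partition n), P t h ≠ 0 →
    ∀ i : Fin (t + 1), rho n (h i).1 (h i).2 ≤ 1

/-- On the event `X_t ≠ Y_t`, the conditional probability of meeting at time `t+1`
is at least `4 s(X_t,Y_t)/n²`. -/
def MeetLowerBound (n : ℕ)
    (P : (t : ℕ) → (Fin (t + 1) → Nat.Partition n × Nat.Partition n) → ℝ) : Prop :=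
  ∀ (t : ℕ) (h : Fin (t + 1) → Nat.Partition n × Nat.Partition n),
    (h (Fin.last t)).1 ≠ (h (Fin.last t)).2 →
      4 * sPart n (h (Fin.last t)).1 (h (Fin.last t)).2 / (n : ℝ) ^ 2 * P t h ≤
        ∑ z : Nat.Partition n, P (t + 1) (Fin.snoc h (z, z))

/-- Probability that the pair of chains at time `t` satisfies `E`. -/
def probAt (n : ℕ)
    (P : (t : ℕ) → (Fin (t + 1) → Nat.Partition n × Nat.Partition n) → ℝ) (t : ℕ)
    (E : Nat.Partition n × Nat.Partition n → Prop) : ℝ :=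
  ∑ h : Fin (t + 1) → Nat.Partition n × Nat.Partition n,
    if E (h (Fin.last t)) then P t h else 0

/-- Expectation of `g(X_t, Y_t)`. -/
def expAt (n : ℕ)
    (P : (t : ℕ) → (Fin (t + 1) → Nat.Partition n × Nat.Partition n) → ℝ) (t : ℕ)
    (g : Nat.Partition n × Nat.Partition n → ℝ) : ℝ :=
  ∑ h : Fin (t + 1) → Nat.Partition n × Nat.Partition n, P t h * g (h (Fin.last t))

/-- A coupling of one step of the split-merge chain from `σ` and from `τ`. -/
def IsOneStepCoupling (n : ℕ) (σ τ : Nat.Partition n)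
    (μ : Nat.Partition n × Nat.Partition n → ℝ) : Prop :=
  (∀ z, 0 ≤ μ z) ∧ (∀ p, ∑ q, μ (p, q) = smKernel n σ p) ∧
    (∀ q, ∑ p, μ (p, q) = smKernel n τ q)

/-- Length of the cycle of `α` containing `v`. -/
def cycLen {n : ℕ} (α : Equiv.Perm (Fin n)) (v : Fin n) : ℕ :=
  Function.minimalPeriod ⇑α v


/-!
Up to exchanging `σ` and `τ`, the parts of `σ` are `b ::ₘ c ::ₘ A` and those of `τ` are
`(b + c) ::ₘ A` with `1 ≤ b ≤ c`. Multiplied by `n²`, the one-step laws from `σ` and `τ` become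
multisets of partitions, and a coupling becomes a multiset of pairs whose two projections are these
multisets. Pair each move inside `A` with the same move on the other side, a merge of `b` or `c`
with `d ∈ A` in `σ` with the merge of `b + c` with `d` in `τ`, and the splits of `b` and of `c` in
`σ` with splits of `b + c` in `τ`; the remaining weight (laziness, the merge of `b` with `c`, the
split of `b + c` into `b, c`) goes to the pairs `(σ, τ)`, `(σ, σ)` and `(τ, τ)`. Every pair is then
within one move, the diagonal pairs have weight `2(b + c) ≥ 4b`, and merging `c` with a part
`d ≥ y` of `A` (weight `2cd`) gives a pair with medium differing part `c + d ≥ x + y`; these pairs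
weigh `2c ∑_{d ∈ A, d ≥ y} d ≥ 2c(R - 2c)`.
-/

namespace SplitMerge

open Multiset

lemma erase_cons_of_mem {a : ℕ} (x : ℕ) {P : Multiset ℕ} (h : a ∈ P) :
    (x ::ₘ P).erase a = x ::ₘ P.erase a := by
  by_cases hxa : x = a
  · subst hxa; rw [erase_cons_head, cons_erase h]
  · rw [erase_cons_tail_of_mem h]

lemma bind_replicate_const {α β : Type*} (s : Multiset α) (k : ℕ) (x : β) :
    (s.bind fun _ => replicate k x) = replicate (card s * k) x := by
  induction s using Multiset.induction_on with
  | empty => simp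
  | cons a s ih => rw [cons_bind, ih, card_cons, Nat.succ_mul, replicate_add, add_comm]

lemma sum_count_comp_of_injective {ι β : Type*} [Fintype ι] [DecidableEq β] {g : ι → β}
    (hg : Function.Injective g) {S : Multiset β} (hS : ∀ x ∈ S, ∃ i, g i = x) :
    ∑ i, S.count (g i) = card S := by
  rw [← sum_count_eq_card (s := Finset.univ.map ⟨g, hg⟩) fun x hx => ?_, Finset.sum_map]
  · rfl
  · obtain ⟨i, rfl⟩ := hS x hx
    exact Finset.mem_map_of_mem _ (Finset.mem_univ i)

lemma exists_parts_eq {n : ℕ} {M : Multiset ℕ} (hpos : ∀ i ∈ M, 0 < i) (hsum : M.sum = n) :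
    ∃ q : Nat.Partition n, q.parts = M :=
  ⟨⟨M, hpos _, hsum⟩, rfl⟩

def splitsOf (x : ℕ) (P : Multiset ℕ) : Multiset (Multiset ℕ) :=
  (Ico 1 x).bind fun r => replicate x (r ::ₘ (x - r) ::ₘ P)

def splitMoves (P : Multiset ℕ) : Multiset (Multiset ℕ) :=
  P.bind fun a => splitsOf a (P.erase a)

def mergesWith (x : ℕ) (P : Multiset ℕ) : Multiset (Multiset ℕ) :=
  P.bind fun d => replicate (x * d) ((x + d) ::ₘ P.erase d)

def mergeMoves (P : Multiset ℕ) : Multiset (Multiset ℕ) :=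
  P.bind fun a => mergesWith a (P.erase a)

def kernelMoves (n : ℕ) (P : Multiset ℕ) : Multiset (Multiset ℕ) :=
  replicate n P + splitMoves P + mergeMoves P

lemma cast_count_replicate_div (k : ℕ) (M Q : Multiset ℕ) (d : ℝ) :
    ((replicate k M).count Q : ℝ) / d = if Q = M then (k : ℝ) / d else 0 := by
  rw [count_replicate]; split_ifs <;> simp_all

lemma smKernel_eq_count_kernelMoves (n : ℕ) (p q : Nat.Partition n) :
    smKernel n p q = ((kernelMoves n p.parts).count q.parts : ℝ) / (n : ℝ) ^ 2 := by
  have hstay : (if q = p then (1 : ℝ) / n else 0) =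
      ((replicate n p.parts).count q.parts : ℝ) / (n : ℝ) ^ 2 := by
    rw [cast_count_replicate_div]
    by_cases hqp : q = p
    · rw [if_pos hqp, if_pos (congrArg Nat.Partition.parts hqp)]
      rcases eq_or_ne (n : ℝ) 0 with h | h
      · simp [h]
      · field_simp
    · rw [if_neg hqp, if_neg (mt Nat.Partition.ext hqp)]
  simp only [smKernel, kernelMoves, splitMoves, splitsOf, mergeMoves, mergesWith, count_add,
    count_bind, Nat.cast_add, Nat.cast_mul, add_div, hstay, Nat.cast_multiset_sum, map_map,
    Function.comp_def, ← sum_map_div, cast_count_replicate_div]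
  rfl

lemma splitMoves_cons (x : ℕ) (P : Multiset ℕ) :
    splitMoves (x ::ₘ P) = splitsOf x P + (splitMoves P).map (x ::ₘ ·) := by
  rw [splitMoves, cons_bind, erase_cons_head, splitMoves, map_bind]
  congr 1
  refine bind_congr fun a ha => ?_
  simp only [splitsOf, erase_cons_of_mem x ha, map_bind, map_replicate, cons_swap x]

lemma mergesWith_cons (x y : ℕ) (P : Multiset ℕ) :
    mergesWith x (y ::ₘ P) =
      replicate (x * y) ((x + y) ::ₘ P) + (mergesWith x P).map (y ::ₘ ·) := by
  rw [mergesWith, cons_bind, erase_cons_head, mergesWith, map_bind]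
  congr 1
  refine bind_congr fun d hd => ?_
  rw [erase_cons_of_mem y hd, map_replicate, cons_swap]

lemma mergeMoves_cons (x : ℕ) (P : Multiset ℕ) :
    mergeMoves (x ::ₘ P) = mergesWith x P + mergesWith x P + (mergeMoves P).map (x ::ₘ ·) := by
  rw [mergeMoves, cons_bind, erase_cons_head, add_assoc, mergeMoves, map_bind]
  congr 1
  have hswap : mergesWith x P = P.bind fun a => replicate (a * x) ((a + x) ::ₘ P.erase a) :=
    bind_congr fun d _ => by rw [Nat.mul_comm, Nat.add_comm]
  rw [hswap, ← bind_add]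
  exact bind_congr fun a ha => by rw [erase_cons_of_mem x ha, mergesWith_cons]

lemma realizable_of_mem_kernelMoves {n : ℕ} {p : Nat.Partition n} {M : Multiset ℕ}
    (hM : M ∈ kernelMoves n p.parts) : ∃ q : Nat.Partition n, q.parts = M := by
  have hsum : ∀ a ∈ p.parts, a + (p.parts.erase a).sum = n := fun a ha => by
    rw [← sum_cons, cons_erase ha, p.parts_sum]
  have hpos : ∀ {a P}, a ∈ P → P ≤ p.parts → 0 < a := fun ha hP => p.parts_pos (mem_of_le hP ha)
  simp only [kernelMoves, splitMoves, splitsOf, mergeMoves, mergesWith, mem_add, mem_bind,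
    mem_replicate, mem_Ico] at hM
  rcases hM with (⟨-, rfl⟩ | ⟨a, ha, r, ⟨hr1, hra⟩, -, rfl⟩) | ⟨a, ha, d, hd, -, rfl⟩
  · exact ⟨p, rfl⟩
  · refine exists_parts_eq (fun i hi => ?_) ?_
    · simp only [mem_cons] at hi
      rcases hi with rfl | rfl | hi
      exacts [by omega, by omega, hpos hi (erase_le a _)]
    · have := hsum a ha
      simp only [sum_cons]; omega
  · refine exists_parts_eq (fun i hi => ?_) ?_
    · simp only [mem_cons] at hi
      rcases hi with rfl | hi
      · exact Nat.add_pos_left (hpos ha le_rfl) _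
      · exact hpos hi ((erase_le d _).trans (erase_le a _))
    · have := hsum a ha
      rw [← cons_erase hd, sum_cons] at this
      simp only [sum_cons]; omega

def tableLaw (n : ℕ) (T : Multiset (Multiset ℕ × Multiset ℕ))
    (z : Nat.Partition n × Nat.Partition n) : ℝ :=
  (T.count (z.1.parts, z.2.parts) : ℝ) / (n : ℝ) ^ 2

variable {n : ℕ} {T : Multiset (Multiset ℕ × Multiset ℕ)}

lemma realizable_of_map_eq_kernelMoves {P : Nat.Partition n}
    {f : Multiset ℕ × Multiset ℕ → Multiset ℕ} (hf : T.map f = kernelMoves n P.parts) :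
    ∀ m ∈ T, ∃ q : Nat.Partition n, q.parts = f m :=
  fun _ hm => realizable_of_mem_kernelMoves (hf ▸ mem_map_of_mem _ hm)

lemma sum_tableLaw_left (hT : ∀ m ∈ T, ∃ q : Nat.Partition n, q.parts = m.2)
    (p : Nat.Partition n) :
    ∑ q, tableLaw n T (p, q) = ((T.map Prod.fst).count p.parts : ℝ) / (n : ℝ) ^ 2 := by
  simp only [tableLaw, ← Finset.sum_div, ← Nat.cast_sum, count_map]
  congr 2
  calc ∑ q : Nat.Partition n, T.count (p.parts, q.parts)
      = ∑ q : Nat.Partition n, (T.filter fun m => p.parts = m.1).count (p.parts, q.parts) :=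
        Finset.sum_congr rfl fun q _ =>
          (count_filter_of_pos (p := fun m : Multiset ℕ × Multiset ℕ => p.parts = m.1) rfl).symm
    _ = _ := by
        refine sum_count_comp_of_injective (g := fun q : Nat.Partition n => (p.parts, q.parts))
          (fun q q' h => Nat.Partition.ext (congrArg Prod.snd h)) fun m hm => ?_
        obtain ⟨hmT, hpm⟩ := mem_filter.mp hm
        obtain ⟨q, hq⟩ := hT m hmT
        exact ⟨q, Prod.ext hpm hq⟩

lemma tableLaw_map_swap (p q : Nat.Partition n) :
    tableLaw n (T.map Prod.swap) (q, p) = tableLaw n T (p, q) := by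
  rw [tableLaw, tableLaw, show (q.parts, p.parts) = Prod.swap (p.parts, q.parts) from rfl,
    count_map_eq_count' _ _ Prod.swap_injective]

lemma isOneStepCoupling_tableLaw {σ τ : Nat.Partition n}
    (hfst : T.map Prod.fst = kernelMoves n σ.parts)
    (hsnd : T.map Prod.snd = kernelMoves n τ.parts) :
    IsOneStepCoupling n σ τ (tableLaw n T) := by
  refine ⟨fun z => by unfold tableLaw; positivity, fun p => ?_, fun q => ?_⟩
  · rw [sum_tableLaw_left (realizable_of_map_eq_kernelMoves hsnd), hfst,
      smKernel_eq_count_kernelMoves]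
  · have hswap_fst : (T.map Prod.swap).map Prod.fst = T.map Prod.snd := map_map _ _ _
    have hswap_snd : (T.map Prod.swap).map Prod.snd = T.map Prod.fst := map_map _ _ _
    simp only [← tableLaw_map_swap (T := T) _ q]
    rw [sum_tableLaw_left (realizable_of_map_eq_kernelMoves (hswap_snd.trans hfst)), hswap_fst,
      hsnd, smKernel_eq_count_kernelMoves]

lemma sum_tableLaw_diag (hT : ∀ m ∈ T, ∃ p : Nat.Partition n, p.parts = m.1) :
    ∑ p : Nat.Partition n, tableLaw n T (p, p) =
      (card (T.filter fun m => m.1 = m.2) : ℝ) / (n : ℝ) ^ 2 := by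
  simp only [tableLaw, ← Finset.sum_div, ← Nat.cast_sum]
  congr 2
  calc ∑ p : Nat.Partition n, T.count (p.parts, p.parts)
      = ∑ p : Nat.Partition n, (T.filter fun m => m.1 = m.2).count (p.parts, p.parts) :=
        Finset.sum_congr rfl fun p _ =>
          (count_filter_of_pos (p := fun m : Multiset ℕ × Multiset ℕ => m.1 = m.2) rfl).symm
    _ = _ := by
        refine sum_count_comp_of_injective (g := fun p : Nat.Partition n => (p.parts, p.parts))
          (fun p p' h => Nat.Partition.ext (congrArg Prod.fst h)) fun m hm => ?_
        obtain ⟨hmT, hm12⟩ := mem_filter.mp hm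
        obtain ⟨p, hp⟩ := hT m hmT
        exact ⟨p, Prod.ext hp (hp.trans hm12)⟩

lemma card_div_le_sum_ite_tableLaw {S : Multiset (Multiset ℕ × Multiset ℕ)} (hST : S ≤ T)
    (E : Nat.Partition n × Nat.Partition n → Prop)
    (hS : ∀ m ∈ S, ∃ z : Nat.Partition n × Nat.Partition n, (z.1.parts, z.2.parts) = m ∧ E z) :
    (card S : ℝ) / (n : ℝ) ^ 2 ≤ ∑ z, if E z then tableLaw n T z else 0 := by
  have hg : Function.Injective
      fun z : Nat.Partition n × Nat.Partition n => (z.1.parts, z.2.parts) :=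
    fun z z' h => Prod.ext (Nat.Partition.ext (congrArg Prod.fst h))
      (Nat.Partition.ext (congrArg Prod.snd h))
  rw [← sum_count_comp_of_injective hg fun m hm => (hS m hm).imp fun z hz => hz.1, Nat.cast_sum,
    Finset.sum_div]
  refine Finset.sum_le_sum fun z _ => ?_
  by_cases hz : (z.1.parts, z.2.parts) ∈ S
  · obtain ⟨z', hz', hE⟩ := hS _ hz
    obtain rfl := hg hz'
    rw [if_pos hE, tableLaw]
    gcongr
  · rw [count_eq_zero.mpr hz, Nat.cast_zero, zero_div]
    split_ifs
    · exact div_nonneg (Nat.cast_nonneg _) (sq_nonneg _)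
    · exact le_rfl

def IsMergeOf (N M : Multiset ℕ) : Prop :=
  ∃ x y C, M = x ::ₘ y ::ₘ C ∧ N = (x + y) ::ₘ C

def IsWithinOneMove (M N : Multiset ℕ) : Prop :=
  M = N ∨ IsMergeOf N M ∨ IsMergeOf M N

lemma IsWithinOneMove.symm {M N : Multiset ℕ} (h : IsWithinOneMove M N) :
    IsWithinOneMove N M := by
  rcases h with h | h | h
  exacts [Or.inl h.symm, Or.inr (Or.inr h), Or.inr (Or.inl h)]

lemma smGraph_adj_of_parts {p q : Nat.Partition n} {x y : ℕ} {C : Multiset ℕ}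
    (hp : p.parts = x ::ₘ y ::ₘ C) (hq : q.parts = (x + y) ::ₘ C) : (smGraph n).Adj p q := by
  have hx : 0 < x := p.parts_pos (by simp [hp])
  have hy : 0 < y := p.parts_pos (by simp [hp])
  refine ⟨fun h => ?_, Or.inl ⟨x + y, by simp [hq], x, hx, by omega, ?_⟩⟩
  · simpa [hp, hq] using congrArg (card ∘ Nat.Partition.parts) h
  · rw [hp, hq, erase_cons_head, Nat.add_sub_cancel_left]

lemma rho_le_one_of_isWithinOneMove {p q : Nat.Partition n}
    (h : IsWithinOneMove p.parts q.parts) : rho n p q ≤ 1 := by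
  rcases h with h | ⟨x, y, C, hp, hq⟩ | ⟨x, y, C, hq, hp⟩
  · simp [rho, Nat.Partition.ext h]
  · exact (SimpleGraph.dist_eq_one_iff_adj.mpr (smGraph_adj_of_parts hp hq)).le
  · exact (SimpleGraph.dist_eq_one_iff_adj.mpr (smGraph_adj_of_parts hq hp).symm).le

lemma rho_le_one_of_tableLaw_ne_zero (hT : ∀ m ∈ T, IsWithinOneMove m.1 m.2)
    {p q : Nat.Partition n} (h : tableLaw n T (p, q) ≠ 0) : rho n p q ≤ 1 := by
  refine rho_le_one_of_isWithinOneMove (hT (p.parts, q.parts) ?_)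
  by_contra hpq
  simp [tableLaw, count_eq_zero.mpr hpq] at h

lemma diffParts_eq {p q : Nat.Partition n} {u v w : ℕ} {C : Multiset ℕ}
    (hp : p.parts = u ::ₘ v ::ₘ C) (hq : q.parts = w ::ₘ C) (huw : u ≠ w) (hvw : v ≠ w) :
    diffParts p q = u ::ₘ v ::ₘ {w} := by
  rw [diffParts, hp, hq, ← singleton_add w, ← singleton_add u, ← singleton_add v, ← add_assoc,
    add_tsub_add_eq_tsub_right, add_tsub_add_eq_tsub_right, sub_singleton, tsub_add_eq_tsub_tsub,
    sub_singleton, sub_singleton, erase_of_notMem (by simp [huw.symm, hvw.symm]),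
    erase_of_notMem (s := {w}) (a := u) (by simpa using huw),
    erase_of_notMem (s := {w}) (a := v) (by simpa using hvw)]
  rfl

lemma sPart_mPart_of_parts {p q : Nat.Partition n} {u v w : ℕ} {C : Multiset ℕ}
    (hp : p.parts = u ::ₘ v ::ₘ C) (hq : q.parts = w ::ₘ C) (huv : u ≤ v) (hvw : v < w) :
    sPart n p q = u ∧ mPart n p q = v := by
  have hne : p ≠ q := fun h => by simpa [hp, hq] using congrArg (card ∘ Nat.Partition.parts) h
  have hsort : (diffParts p q).sort (· ≤ ·) = [u, v, w] := by
    rw [diffParts_eq hp hq (by omega) (by omega)]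
    exact (coe_sort [u, v, w] _).trans (List.mergeSort_eq_self _ (by simp; omega))
  simp [sPart, mPart, hne, hsort]

lemma sPart_comm (p q : Nat.Partition n) : sPart n p q = sPart n q p := by
  by_cases h : p = q
  · rw [h]
  · rw [sPart, sPart, if_neg h, if_neg (Ne.symm h), diffParts, diffParts, add_comm]

lemma mPart_comm (p q : Nat.Partition n) : mPart n p q = mPart n q p := by
  by_cases h : p = q
  · rw [h]
  · rw [mPart, mPart, if_neg h, if_neg (Ne.symm h), diffParts, diffParts, add_comm]

def mergeTable (b c : ℕ) (A : Multiset ℕ) : Multiset (Multiset ℕ × Multiset ℕ) :=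
  replicate A.sum (b ::ₘ c ::ₘ A, (b + c) ::ₘ A)
  + replicate (b + c) (b ::ₘ c ::ₘ A, b ::ₘ c ::ₘ A)
  + replicate (b + c) ((b + c) ::ₘ A, (b + c) ::ₘ A)
  + (Ico 1 b).bind (fun r => replicate c ((b + c) ::ₘ A, r ::ₘ (b + c - r) ::ₘ A))
  + (Ioo b (b + c)).bind (fun r => replicate b ((b + c) ::ₘ A, r ::ₘ (b + c - r) ::ₘ A))
  + (Ico 1 b).bind (fun r => replicate b (r ::ₘ (b - r) ::ₘ c ::ₘ A, r ::ₘ (b + c - r) ::ₘ A))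
  + (Ico 1 c).bind (fun r => replicate c (b ::ₘ r ::ₘ (c - r) ::ₘ A, (b + r) ::ₘ (c - r) ::ₘ A))
  + 2 • A.bind (fun d => replicate (b * d) (c ::ₘ (b + d) ::ₘ A.erase d, (b + c + d) ::ₘ A.erase d))
  + 2 • A.bind (fun d => replicate (c * d) (b ::ₘ (c + d) ::ₘ A.erase d, (b + c + d) ::ₘ A.erase d))
  + (splitMoves A + mergeMoves A).map fun M => (b ::ₘ c ::ₘ M, (b + c) ::ₘ M)

variable {b c : ℕ} {A : Multiset ℕ}

lemma mergeTable_map_fst (hb : 1 ≤ b) (hc : 1 ≤ c) (hn : b + c + A.sum = n) :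
    (mergeTable b c A).map Prod.fst = kernelMoves n (b ::ₘ c ::ₘ A) := by
  have hstay : replicate n (b ::ₘ c ::ₘ A) =
      replicate A.sum (b ::ₘ c ::ₘ A) + replicate (b + c) (b ::ₘ c ::ₘ A) := by
    rw [← replicate_add]; congr 1; omega
  have hmerge : replicate (b + c) ((b + c) ::ₘ A)
      + replicate (card (Ico 1 b) * c) ((b + c) ::ₘ A)
      + replicate (card (Ioo b (b + c)) * b) ((b + c) ::ₘ A) =
      2 • replicate (b * c) ((b + c) ::ₘ A) := by
    rw [two_nsmul, ← replicate_add, ← replicate_add, ← replicate_add,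
      show card (Ico 1 b) = b - 1 from Nat.card_Ico 1 b,
      show card (Ioo b (b + c)) = c - 1 from (Nat.card_Ioo b (b + c)).trans (by omega)]
    congr 1
    obtain ⟨b, rfl⟩ := Nat.exists_eq_add_of_le hb
    obtain ⟨c, rfl⟩ := Nat.exists_eq_add_of_le hc
    simp only [Nat.add_sub_cancel_left]; ring
  simp only [mergeTable, kernelMoves, splitMoves_cons, mergeMoves_cons, mergesWith_cons, map_add,
    map_nsmul, map_bind, map_replicate, map_map, Function.comp_def, bind_replicate_const, hstay]
  simp only [splitsOf, mergesWith, map_bind, map_replicate]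
  abel_nf
  rw [← hmerge]
  abel

lemma splitsOf_add (hb : 1 ≤ b) (hc : 1 ≤ c) :
    splitsOf (b + c) A =
      (Ico 1 b).bind (fun r => replicate c (r ::ₘ (b + c - r) ::ₘ A))
      + (Ico 1 b).bind (fun r => replicate b (r ::ₘ (b + c - r) ::ₘ A))
      + replicate (b + c) (b ::ₘ c ::ₘ A)
      + (Ioo b (b + c)).bind (fun r => replicate b (r ::ₘ (b + c - r) ::ₘ A))
      + (Ico 1 c).bind (fun r => replicate c ((b + r) ::ₘ (c - r) ::ₘ A)) := by
  have hshift : (Ioo b (b + c)).bind (fun r => replicate c (r ::ₘ (b + c - r) ::ₘ A)) =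
      (Ico 1 c).bind (fun r => replicate c ((b + r) ::ₘ (c - r) ::ₘ A)) := by
    rw [show Ioo b (b + c) = (Ico 1 c).map (b + ·) by rw [map_add_left_Ico]; rfl, bind_map]
    simp only [Nat.add_sub_add_left]
  rw [splitsOf, ← Ico_add_Ico_eq_Ico hb (Nat.le_add_right b c),
    ← Ioo_cons_left (a := b) (b := b + c) (by omega), add_bind, cons_bind, Nat.add_sub_cancel_left]
  simp only [replicate_add, bind_add]
  rw [hshift]
  abel

lemma mergesWith_add (b c : ℕ) (A : Multiset ℕ) :
    mergesWith (b + c) A =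
      A.bind (fun d => replicate (b * d) ((b + c + d) ::ₘ A.erase d))
      + A.bind (fun d => replicate (c * d) ((b + c + d) ::ₘ A.erase d)) := by
  simp only [mergesWith, Nat.add_mul, replicate_add, bind_add]

lemma mergeTable_map_snd (hb : 1 ≤ b) (hc : 1 ≤ c) (hn : b + c + A.sum = n) :
    (mergeTable b c A).map Prod.snd = kernelMoves n ((b + c) ::ₘ A) := by
  have hstay : replicate n ((b + c) ::ₘ A) =
      replicate A.sum ((b + c) ::ₘ A) + replicate (b + c) ((b + c) ::ₘ A) := by
    rw [← replicate_add]; congr 1; omega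
  simp only [mergeTable, kernelMoves, splitMoves_cons, mergeMoves_cons, splitsOf_add hb hc,
    mergesWith_add, map_add, map_nsmul, map_bind, map_replicate, map_map, Function.comp_def,
    hstay]
  abel

lemma mergeTable_isWithinOneMove : ∀ m ∈ mergeTable b c A, IsWithinOneMove m.1 m.2 := by
  have merge : ∀ {M N} x y C, M = x ::ₘ y ::ₘ C → N = (x + y) ::ₘ C → IsWithinOneMove M N :=
    fun x y C hM hN => Or.inr (Or.inl ⟨x, y, C, hM, hN⟩)
  intro m hm
  simp only [mergeTable, mem_add, mem_nsmul, mem_bind, mem_replicate, mem_map, mem_Ico,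
    mem_Ioo, or_assoc] at hm
  rcases hm with ⟨-, rfl⟩ | ⟨-, rfl⟩ | ⟨-, rfl⟩ | ⟨r, hr, -, rfl⟩ | ⟨r, hr, -, rfl⟩ |
    ⟨r, hr, -, rfl⟩ | ⟨r, -, -, rfl⟩ | ⟨-, d, -, -, rfl⟩ | ⟨-, d, -, -, rfl⟩ | ⟨M, -, rfl⟩
  · exact merge b c A rfl rfl
  · exact Or.inl rfl
  · exact Or.inl rfl
  · exact (merge r (b + c - r) A rfl (by rw [Nat.add_sub_cancel' (by omega)])).symm
  · exact (merge r (b + c - r) A rfl (by rw [Nat.add_sub_cancel' (by omega)])).symm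
  · exact merge (b - r) c (r ::ₘ A) (by simp only [cons_swap r])
      (by dsimp only; rw [← Nat.sub_add_comm (by omega)]; exact cons_swap _ _ _)
  · exact merge b r ((c - r) ::ₘ A) rfl rfl
  · exact merge c (b + d) (A.erase d) rfl (by rw [Nat.add_left_comm, Nat.add_assoc])
  · exact merge b (c + d) (A.erase d) rfl (by rw [Nat.add_assoc])
  · exact merge b c M rfl rfl

lemma two_mul_add_le_card_filter_mergeTable :
    2 * (b + c) ≤ card ((mergeTable b c A).filter fun m => m.1 = m.2) := by
  have hle : replicate (b + c) (b ::ₘ c ::ₘ A, b ::ₘ c ::ₘ A)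
      + replicate (b + c) ((b + c) ::ₘ A, (b + c) ::ₘ A) ≤ mergeTable b c A :=
    le_iff_count.mpr fun m => by simp only [mergeTable, count_add]; omega
  calc 2 * (b + c)
      = card ((replicate (b + c) (b ::ₘ c ::ₘ A, b ::ₘ c ::ₘ A)
          + replicate (b + c) ((b + c) ::ₘ A, (b + c) ::ₘ A)).filter fun m => m.1 = m.2) := by
        rw [filter_eq_self.mpr fun m hm => by
          rcases mem_add.mp hm with hm | hm <;> rw [eq_of_mem_replicate hm]]
        simp only [card_add, card_replicate]; ring
    _ ≤ _ := card_le_card (filter_le_filter _ hle)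

lemma mergeTable_growth (hA : ∀ d ∈ A, 0 < d) (hb : 1 ≤ b) (hbc : b ≤ c) {x y R : ℝ}
    (hxc : x ≤ c) (hR : R ≤ (((A.filter fun a : ℕ => y ≤ (a : ℝ)).sum : ℕ) : ℝ) + b + c) :
    ∃ S ≤ mergeTable b c A, (∀ m ∈ S, ∀ p q : Nat.Partition n, p.parts = m.1 → q.parts = m.2 →
      x + y ≤ mPart n p q) ∧ 2 * (c : ℝ) * (R - 2 * c) ≤ card S := by
  set F := A.filter fun a : ℕ => y ≤ (a : ℝ)
  set f := fun d => replicate (c * d) (b ::ₘ (c + d) ::ₘ A.erase d, (b + c + d) ::ₘ A.erase d)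
  have hF : F.bind f ≤ A.bind f := by
    conv_rhs => rw [← filter_add_not (fun a : ℕ => y ≤ (a : ℝ)) A]
    rw [add_bind]
    exact Multiset.le_add_right _ _
  refine ⟨2 • F.bind f, le_iff_count.mpr fun m => ?_, fun m hm p q hp hq => ?_, ?_⟩
  · have := count_le_of_le m hF
    simp only [f] at this ⊢
    simp only [mergeTable, count_add, count_nsmul]
    omega
  · obtain ⟨d, hd, -, rfl⟩ : ∃ d ∈ F, c * d ≠ 0 ∧ m = _ := by
      simpa only [mem_nsmul, mem_bind, mem_replicate, f, ne_eq, OfNat.ofNat_ne_zero,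
        not_false_eq_true, true_and] using hm
    obtain ⟨hdA, hyd⟩ := mem_filter.mp hd
    have := hA d hdA
    rw [(sPart_mPart_of_parts hp hq (by omega) (by omega)).2]
    push_cast
    linarith
  · have hcard : card (2 • F.bind f) = 2 * (c * F.sum) := by
      simp only [card_nsmul, card_bind, f, Function.comp_def, card_replicate]
      rw [sum_map_mul_left, map_id']
    have hRF : R - 2 * c ≤ (F.sum : ℝ) := by
      have : (b : ℝ) ≤ c := by exact_mod_cast hbc
      linarith
    rw [hcard, Nat.cast_mul, Nat.cast_mul, Nat.cast_ofNat]
    linarith [mul_le_mul_of_nonneg_left hRF (Nat.cast_nonneg c : (0 : ℝ) ≤ c)]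

def IsGrowthCoupling (n : ℕ) (σ τ : Nat.Partition n)
    (μ : Nat.Partition n × Nat.Partition n → ℝ) : Prop :=
  IsOneStepCoupling n σ τ μ ∧
    (∀ p q, μ (p, q) ≠ 0 → rho n p q ≤ 1) ∧
    4 * sPart n σ τ / (n : ℝ) ^ 2 ≤ (∑ p, μ (p, p)) ∧
    ∀ x y R : ℝ, 0 < x → x ≤ mPart n σ τ → R ≤ Vsum σ y →
      2 * mPart n σ τ * (R - 2 * mPart n σ τ) / (n : ℝ) ^ 2 ≤
        ∑ z : Nat.Partition n × Nat.Partition n, if x + y ≤ mPart n z.1 z.2 then μ z else 0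

/-- `V` stands for an upper bound of `y ↦ |V(σ, y)|` that also holds for `τ`, which makes the
notion invariant under exchanging the two sides. -/
structure IsGrowthTable (n : ℕ) (σ τ : Nat.Partition n) (V : ℝ → ℝ)
    (T : Multiset (Multiset ℕ × Multiset ℕ)) : Prop where
  map_fst : T.map Prod.fst = kernelMoves n σ.parts
  map_snd : T.map Prod.snd = kernelMoves n τ.parts
  isWithinOneMove : ∀ m ∈ T, IsWithinOneMove m.1 m.2
  four_mul_sPart_le : 4 * sPart n σ τ ≤ card (T.filter fun m => m.1 = m.2)
  growth : ∀ x y R : ℝ, x ≤ mPart n σ τ → R ≤ V y → ∃ S ≤ T,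
    (∀ m ∈ S, ∀ p q : Nat.Partition n, p.parts = m.1 → q.parts = m.2 → x + y ≤ mPart n p q) ∧
    2 * mPart n σ τ * (R - 2 * mPart n σ τ) ≤ card S

lemma IsGrowthTable.swap {σ τ : Nat.Partition n} {V : ℝ → ℝ} (hT : IsGrowthTable n σ τ V T) :
    IsGrowthTable n τ σ V (T.map Prod.swap) where
  map_fst := by rw [map_map]; exact hT.map_snd
  map_snd := by rw [map_map]; exact hT.map_fst
  isWithinOneMove := by
    simp only [mem_map]
    rintro _ ⟨m, hm, rfl⟩
    exact (hT.isWithinOneMove m hm).symm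
  four_mul_sPart_le := by
    have hdiag : T.filter ((fun m : Multiset ℕ × Multiset ℕ => m.1 = m.2) ∘ Prod.swap) =
        T.filter fun m => m.1 = m.2 := filter_congr fun _ _ => eq_comm
    rw [sPart_comm, filter_map, card_map, hdiag]
    exact hT.four_mul_sPart_le
  growth x y R hxm hR := by
    obtain ⟨S, hST, hS, hcard⟩ := hT.growth x y R (mPart_comm σ τ ▸ hxm) hR
    refine ⟨S.map Prod.swap, map_le_map hST, ?_, by rwa [mPart_comm, card_map]⟩
    simp only [mem_map]
    rintro _ ⟨m, hm, rfl⟩ p q hp hq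
    rw [mPart_comm]
    exact hS m hm q p hq hp

lemma IsGrowthTable.isGrowthCoupling {σ τ : Nat.Partition n} {V : ℝ → ℝ}
    (hT : IsGrowthTable n σ τ V T) (hV : ∀ y, Vsum σ y ≤ V y) :
    IsGrowthCoupling n σ τ (tableLaw n T) := by
  refine ⟨isOneStepCoupling_tableLaw hT.map_fst hT.map_snd,
    fun p q => rho_le_one_of_tableLaw_ne_zero hT.isWithinOneMove, ?_, fun x y R _ hxm hR => ?_⟩
  · rw [sum_tableLaw_diag (realizable_of_map_eq_kernelMoves hT.map_fst)]
    exact div_le_div_of_nonneg_right hT.four_mul_sPart_le (sq_nonneg _)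
  · obtain ⟨S, hST, hS, hcard⟩ := hT.growth x y R hxm (hR.trans (hV y))
    refine (div_le_div_of_nonneg_right hcard (sq_nonneg _)).trans
      (card_div_le_sum_ite_tableLaw hST _ fun m hm => ?_)
    obtain ⟨p, hp⟩ := realizable_of_map_eq_kernelMoves hT.map_fst m (mem_of_le hST hm)
    obtain ⟨q, hq⟩ := realizable_of_map_eq_kernelMoves hT.map_snd m (mem_of_le hST hm)
    exact ⟨(p, q), by rw [hp, hq], hS m hm p q hp hq⟩

lemma isGrowthTable_mergeTable {σ τ : Nat.Partition n} (hσ : σ.parts = b ::ₘ c ::ₘ A)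
    (hτ : τ.parts = (b + c) ::ₘ A) (hb : 1 ≤ b) (hbc : b ≤ c) :
    IsGrowthTable n σ τ (fun y => (((A.filter fun a : ℕ => y ≤ (a : ℝ)).sum : ℕ) : ℝ) + b + c)
      (mergeTable b c A) := by
  have hn : b + c + A.sum = n := by rw [← τ.parts_sum, hτ, sum_cons]
  have hA : ∀ d ∈ A, 0 < d := fun d hd => τ.parts_pos (hτ ▸ mem_cons_of_mem hd)
  obtain ⟨hs, hm⟩ := sPart_mPart_of_parts hσ hτ hbc (by omega)
  refine ⟨hσ ▸ mergeTable_map_fst hb (by omega) hn, hτ ▸ mergeTable_map_snd hb (by omega) hn,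
    mergeTable_isWithinOneMove, ?_,
    fun x y R hxm hR => hm ▸ mergeTable_growth hA hb hbc (hm ▸ hxm) hR⟩
  have := two_mul_add_le_card_filter_mergeTable (b := b) (c := c) (A := A)
  rw [hs]
  exact_mod_cast (by omega : 4 * b ≤ card ((mergeTable b c A).filter fun m => m.1 = m.2))

lemma vsum_le_of_parts_eq_add {σ : Nat.Partition n} {B A : Multiset ℕ} (h : σ.parts = B + A)
    (y : ℝ) : Vsum σ y ≤ (((A.filter fun a : ℕ => y ≤ (a : ℝ)).sum : ℕ) : ℝ) + B.sum := by
  have hB : (B.filter fun a : ℕ => y ≤ (a : ℝ)).sum ≤ B.sum := by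
    conv_rhs => rw [← filter_add_not (fun a : ℕ => y ≤ (a : ℝ)) B, sum_add]
    exact Nat.le_add_right _ _
  rw [Vsum, h, filter_add, sum_add, add_comm]
  exact_mod_cast Nat.add_le_add_left hB _

lemma exists_merge_of_isSplitOf {p q : Nat.Partition n} (h : IsSplitOf n p q) :
    ∃ b c A, 1 ≤ b ∧ b ≤ c ∧ p.parts = b ::ₘ c ::ₘ A ∧ q.parts = (b + c) ::ₘ A := by
  obtain ⟨a, ha, r, hr, hra, hp⟩ := h
  rcases le_total r (a - r) with hle | hle
  · exact ⟨r, a - r, q.parts.erase a, hr, hle, hp,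
      by rw [Nat.add_sub_cancel' hra.le, cons_erase ha]⟩
  · exact ⟨a - r, r, q.parts.erase a, by omega, hle, by rw [hp, cons_swap],
      by rw [Nat.sub_add_cancel hra.le, cons_erase ha]⟩

theorem exists_isGrowthCoupling {σ τ : Nat.Partition n} (h : rho n σ τ = 1) :
    ∃ μ, IsGrowthCoupling n σ τ μ := by
  obtain ⟨-, hsplit | hsplit⟩ := SimpleGraph.dist_eq_one_iff_adj.mp h
  · obtain ⟨b, c, A, hb, hbc, hσ, hτ⟩ := exists_merge_of_isSplitOf hsplit
    refine ⟨_, (isGrowthTable_mergeTable hσ hτ hb hbc).isGrowthCoupling fun y => ?_⟩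
    have := vsum_le_of_parts_eq_add (B := b ::ₘ {c}) (by rw [hσ, cons_add, singleton_add]) y
    simp only [sum_cons, sum_singleton, Nat.cast_add] at this
    linarith
  · obtain ⟨b, c, A, hb, hbc, hτ, hσ⟩ := exists_merge_of_isSplitOf hsplit
    refine ⟨_, (isGrowthTable_mergeTable hτ hσ hb hbc).swap.isGrowthCoupling fun y => ?_⟩
    have := vsum_le_of_parts_eq_add (B := {b + c}) (by rw [hσ, singleton_add]) y
    simp only [sum_singleton, Nat.cast_add] at this
    linarith

end SplitMerge

theorem m_growth_coupling_general (n : ℕ) (σ τ : Nat.Partition n)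
    (h : rho n σ τ = 1) :
    ∃ μ : Nat.Partition n × Nat.Partition n → ℝ,
      IsOneStepCoupling n σ τ μ ∧
      (∀ p q, μ (p, q) ≠ 0 → rho n p q ≤ 1) ∧
      4 * sPart n σ τ / (n : ℝ) ^ 2 ≤ (∑ p, μ (p, p)) ∧
      ∀ x y R : ℝ, 0 < x → x ≤ mPart n σ τ → R ≤ Vsum σ y →
        2 * mPart n σ τ * (R - 2 * mPart n σ τ) / (n : ℝ) ^ 2 ≤
          ∑ z : Nat.Partition n × Nat.Partition n,
            if x + y ≤ mPart n z.1 z.2 then μ z else 0 :=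
  SplitMerge.exists_isGrowthCoupling h

/-- One-step coupling with control on the growth of `m`:
`ℙ(m(X₁,Y₁) ≥ x + y) ≥ 2c(R − 2c)/n²` whenever `0 < x ≤ c` and `|V(σ,y)| ≥ R`. -/
theorem m_growth_coupling (n : ℕ) (hn : 1 ≤ n) (σ τ : Nat.Partition n)
    (h : rho n σ τ = 1) :
    ∃ μ : Nat.Partition n × Nat.Partition n → ℝ,
      IsOneStepCoupling n σ τ μ ∧
      (∀ p q, μ (p, q) ≠ 0 → rho n p q ≤ 1) ∧
      4 * sPart n σ τ / (n : ℝ) ^ 2 ≤ (∑ p, μ (p, p)) ∧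
      ∀ x y R : ℝ, 0 < x → x ≤ mPart n σ τ → R ≤ Vsum σ y →
        2 * mPart n σ τ * (R - 2 * mPart n σ τ) / (n : ℝ) ^ 2 ≤
          ∑ z : Nat.Partition n × Nat.Partition n,
            if x + y ≤ mPart n z.1 z.2 then μ z else 0 :=
  m_growth_coupling_general n σ τ h

end
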